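/- arXiv:1812.06132 — 2 statements merged into one kernel-verified Lean document; each statement's English description precedes it below -/
import Mathlib

section
/- Let r ∈ ℕ and let x : [0,1] → ℝ^n be (r+2)-times continuously differentiable. Then there exist constants C_0,…,C_r > 0, independent of N, such that for every N ∈ ℕ large enough and every t ∈ [0,1] and every 0 ≤ s ≤ r, the s-th derivative of the Bernstein approximation satisfies ‖(B_N x)^{(s)}(t) − x^{(s)}(t)‖ ≤ C_s / N. -/
open scoped BigOperators

/-- The Bernstein basis polynomial `b_{j,N}(t) = C(N,j) t^j (1-t)^(N-j)`. -/
noncomputable def bern (N j : ℕ) (t : ℝ) : ℝ :=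
  (N.choose j : ℝ) * t ^ j * (1 - t) ^ (N - j)

/-- The `N`-th Bernstein approximation of `g : [0,1] → E`. -/
noncomputable def bapprox {E : Type*} [AddCommMonoid E] [Module ℝ E]
    (N : ℕ) (g : ℝ → E) (t : ℝ) : E :=
  ∑ j : Fin (N + 1), bern N (j : ℕ) t • g (((j : ℕ) : ℝ) / (N : ℝ))

/-!
Differentiating `B_N x` `s` times gives `N (N-1) ⋯ (N-s+1)` times the Bernstein polynomial of
degree `M = N - s` whose coefficients are the `s`-th forward differences `Δ^s x (j/N)` with step
`1/N`. By a mean-value argument using the bound on `x^(s+1)`, each rescaled difference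
`N^s Δ^s x (j/N)` is within `O(1/N)` of `x^(s) (j/M)`, and `N (N-1) ⋯ (N-s+1) / N^s = 1 - O(1/N)`.
What remains is `B_M (x^(s)) - x^(s)`, which is `O(1/M)` by the second-order Taylor bound
(using `x^(s+2)`) and the variance identity `∑ b_{M,j}(t) (j/M - t)^2 = t(1-t)/M`.
-/

open Set Finset fwdDiff

lemma bern_eq_eval (N j : ℕ) (t : ℝ) : bern N j t = (bernsteinPolynomial ℝ N j).eval t := by
  simp [bernsteinPolynomial, bern]

lemma bern_nonneg (N j : ℕ) {t : ℝ} (ht : t ∈ Icc (0 : ℝ) 1) : 0 ≤ bern N j t := by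
  have h0 := ht.1
  have h1 := sub_nonneg.2 ht.2
  unfold bern
  positivity

lemma sum_bern (N : ℕ) (t : ℝ) : ∑ j ∈ range (N + 1), bern N j t = 1 := by
  simpa [Polynomial.eval_finsetSum, bern_eq_eval] using
    congr_arg (Polynomial.eval t) (bernsteinPolynomial.sum ℝ N)

lemma sum_bern_mul_cast (N : ℕ) (t : ℝ) : ∑ j ∈ range (N + 1), bern N j t * j = N * t := by
  simpa [Polynomial.eval_finsetSum, bern_eq_eval, mul_comm] using
    congr_arg (Polynomial.eval t) (bernsteinPolynomial.sum_smul ℝ N)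

lemma sum_bern_mul_sub_sq (N : ℕ) (t : ℝ) :
    ∑ j ∈ range (N + 1), bern N j t * (j - N * t) ^ 2 = N * t * (1 - t) := by
  have := congr_arg (Polynomial.eval t) (bernsteinPolynomial.variance ℝ N)
  simp only [Polynomial.eval_finsetSum, Polynomial.eval_mul, Polynomial.eval_pow,
    Polynomial.eval_sub, Polynomial.eval_X, Polynomial.eval_natCast,
    Polynomial.eval_one, nsmul_eq_mul, ← bern_eq_eval] at this
  rw [← this]
  exact sum_congr rfl fun j _ => by ring

lemma bapprox_eq_sum_range {E : Type*} [AddCommMonoid E] [Module ℝ E] (N : ℕ) (g : ℝ → E)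
    (t : ℝ) : bapprox N g t = ∑ j ∈ range (N + 1), bern N j t • g (j / N) :=
  Fin.sum_univ_eq_sum_range (fun j => bern N j t • g (j / N)) (N + 1)

lemma norm_sum_bern_smul_le_sum {E : Type*} [SeminormedAddCommGroup E] [NormedSpace ℝ E]
    (N : ℕ) {t : ℝ} (ht : t ∈ Icc (0 : ℝ) 1) {c : ℕ → E} {ε : ℕ → ℝ} (hc : ∀ j ≤ N, ‖c j‖ ≤ ε j) :
    ‖∑ j ∈ range (N + 1), bern N j t • c j‖ ≤ ∑ j ∈ range (N + 1), bern N j t * ε j := by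
  refine (norm_sum_le _ _).trans (sum_le_sum fun j hj => ?_)
  rw [norm_smul, Real.norm_of_nonneg (bern_nonneg N j ht)]
  exact mul_le_mul_of_nonneg_left (hc j (Nat.lt_succ_iff.1 (mem_range.1 hj)))
    (bern_nonneg N j ht)

lemma norm_sum_bern_smul_le {E : Type*} [SeminormedAddCommGroup E] [NormedSpace ℝ E]
    (N : ℕ) {t ε : ℝ} (ht : t ∈ Icc (0 : ℝ) 1) {c : ℕ → E} (hc : ∀ j ≤ N, ‖c j‖ ≤ ε) :
    ‖∑ j ∈ range (N + 1), bern N j t • c j‖ ≤ ε := by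
  simpa [← sum_mul, sum_bern] using norm_sum_bern_smul_le_sum N ht (ε := fun _ => ε) hc

lemma nat_div_mem_Icc {j M : ℕ} (hj : j ≤ M) : (j : ℝ) / M ∈ Icc (0 : ℝ) 1 :=
  ⟨by positivity, div_le_one_of_le₀ (by exact_mod_cast hj) (Nat.cast_nonneg _)⟩

lemma nat_div_add_mem_Icc {j M s : ℕ} (hj : j ≤ M) :
    (j : ℝ) / ↑(M + s) ∈ Icc (0 : ℝ) (1 - s / ↑(M + s)) := by
  refine ⟨by positivity, ?_⟩
  rcases Nat.eq_zero_or_pos (M + s) with h | h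
  · simp [h]
  rw [le_sub_iff_add_le, ← add_div, div_le_one (by exact_mod_cast h)]
  exact_mod_cast (by omega : j + s ≤ M + s)

lemma abs_nat_div_add_sub_nat_div_le {j M s : ℕ} (hj : j ≤ M) :
    |(j : ℝ) / ↑(M + s) - j / M| ≤ s / ↑(M + s) := by
  rcases Nat.eq_zero_or_pos M with rfl | hM
  · simp [Nat.le_zero.1 hj, div_nonneg]
  have hM' : (0 : ℝ) < M := by exact_mod_cast hM
  have hj' : (j : ℝ) ≤ M := by exact_mod_cast hj
  have hs : (0 : ℝ) ≤ s := Nat.cast_nonneg s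
  rw [abs_sub_comm, abs_of_nonneg (sub_nonneg.2 (by gcongr; linarith)), Nat.cast_add,
    div_sub_div _ _ hM'.ne' (by positivity), div_le_div_iff₀ (by positivity) (by positivity)]
  nlinarith [mul_le_mul_of_nonneg_right hj' (mul_nonneg hs (add_nonneg hM'.le hs))]

section BernsteinDeriv

variable {E : Type*} [NormedAddCommGroup E] [NormedSpace ℝ E]

lemma hasDerivAt_bern_zero (M : ℕ) (t : ℝ) :
    HasDerivAt (bern (M + 1) 0) (-(M + 1) * bern M 0 t) t := by
  have := (bernsteinPolynomial ℝ (M + 1) 0).hasDerivAt t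
  rw [bernsteinPolynomial.derivative_zero] at this
  simpa [funext (bern_eq_eval _ _), bern_eq_eval] using this

lemma hasDerivAt_bern_succ (M j : ℕ) (t : ℝ) :
    HasDerivAt (bern (M + 1) (j + 1)) ((M + 1) * (bern M j t - bern M (j + 1) t)) t := by
  have := (bernsteinPolynomial ℝ (M + 1) (j + 1)).hasDerivAt t
  rw [bernsteinPolynomial.derivative_succ] at this
  simpa [funext (bern_eq_eval _ _), bern_eq_eval] using this

lemma hasDerivAt_sum_bern_smul (M : ℕ) (c : ℕ → E) (t : ℝ) :
    HasDerivAt (fun t => ∑ j ∈ range (M + 2), bern (M + 1) j t • c j)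
      (((M : ℝ) + 1) • ∑ j ∈ range (M + 1), bern M j t • Δ_[1] c j) t := by
  have h := (HasDerivAt.fun_sum fun j (_ : j ∈ range (M + 1)) =>
    (hasDerivAt_bern_succ M j t).smul_const (c (j + 1))).add
      ((hasDerivAt_bern_zero M t).smul_const (c 0))
  convert h using 1
  · exact funext fun u => sum_range_succ' _ _
  -- summation by parts; the boundary term `bern M (M + 1)` vanishes
  have hlast : bern M (M + 1) t = 0 := by simp [bern]
  have shift := sum_range_succ' (fun j => bern M j t • c j) (M + 1)
  rw [sum_range_succ, hlast, zero_smul, add_zero] at shift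
  simp only [fwdDiff, smul_sub, sub_smul, mul_smul, neg_mul, neg_smul, sum_sub_distrib,
    ← smul_sum, shift, smul_add]
  abel

lemma iteratedDeriv_sum_bern_smul {N s : ℕ} (hs : s ≤ N) (c : ℕ → E) :
    iteratedDeriv s (fun t => ∑ j ∈ range (N + 1), bern N j t • c j) = fun t =>
      (N.descFactorial s : ℝ) • ∑ j ∈ range (N - s + 1), bern (N - s) j t • Δ_[1] ^[s] c j := by
  induction s with
  | zero => simp
  | succ s ih =>
    obtain ⟨M, hM⟩ : ∃ M, N - s = M + 1 := ⟨N - s - 1, by omega⟩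
    ext t
    rw [iteratedDeriv_succ, ih (by omega), hM,
      ((hasDerivAt_sum_bern_smul M (Δ_[1] ^[s] c) t).fun_const_smul _).deriv,
      Nat.descFactorial_succ, hM, show N - (s + 1) = M by omega, smul_smul,
      Function.iterate_succ_apply']
    congr 1
    push_cast
    ring

end BernsteinDeriv

lemma fwdDiff_iter_comp_div {E : Type*} [AddCommGroup E] (g : ℝ → E) (N s j : ℕ) :
    Δ_[1] ^[s] (fun i : ℕ => g (i / N)) j = Δ_[1 / (N : ℝ)] ^[s] g (j / N) := by
  simp only [fwdDiff_iter_eq_sum_shift]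
  refine sum_congr rfl fun k _ => ?_
  congr 2
  simp only [smul_eq_mul, nsmul_eq_mul, mul_one, Nat.cast_add]
  ring

lemma iteratedDeriv_bapprox {E : Type*} [NormedAddCommGroup E] [NormedSpace ℝ E] {N s : ℕ}
    (hs : s ≤ N) (g : ℝ → E) :
    iteratedDeriv s (bapprox N g) = fun t => (N.descFactorial s : ℝ) •
      ∑ j ∈ range (N - s + 1), bern (N - s) j t • Δ_[1 / (N : ℝ)] ^[s] g (j / N) := by
  simp only [funext (bapprox_eq_sum_range N g), ← fwdDiff_iter_comp_div]
  exact iteratedDeriv_sum_bern_smul hs (fun i : ℕ => g (i / N))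

section FwdDiffEstimate
variable {E : Type*} [NormedAddCommGroup E] [NormedSpace ℝ E] {a b h : ℝ}

lemma hasDerivWithinAt_fwdDiff_iter (hh : 0 ≤ h) {f f' : ℝ → E}
    (hf : ∀ w ∈ Icc a b, HasDerivWithinAt f (f' w) (Icc a b) w) (n : ℕ) {w : ℝ}
    (hw : w ∈ Icc a (b - n * h)) :
    HasDerivWithinAt (Δ_[h] ^[n] f) (Δ_[h] ^[n] f' w) (Icc a (b - n * h)) w := by
  have shift_mem : ∀ k ∈ range (n + 1), MapsTo (· + k • h) (Icc a (b - n * h)) (Icc a b) := by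
    intro k hk y hy
    have : (k : ℝ) ≤ n := by exact_mod_cast Nat.lt_succ_iff.1 (mem_range.1 hk)
    rw [nsmul_eq_mul]
    constructor <;> nlinarith [hy.1, hy.2]
  rw [funext (fwdDiff_iter_eq_sum_shift h f n), fwdDiff_iter_eq_sum_shift]
  refine HasDerivWithinAt.fun_sum fun k hk => HasDerivWithinAt.fun_const_smul _ ?_
  simpa [Function.comp_def] using (hf _ (shift_mem k hk hw)).scomp w
    ((hasDerivWithinAt_id w _).add_const (k • h)) (shift_mem k hk)

lemma norm_fwdDiff_iter_sub_le (hh : 0 ≤ h) {L : ℝ} :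
    ∀ (s : ℕ) (Φ : ℕ → ℝ → E),
    (∀ k ≤ s, ∀ w ∈ Icc a b, HasDerivWithinAt (Φ k) (Φ (k + 1) w) (Icc a b) w) →
    (∀ w ∈ Icc a b, ‖Φ (s + 1) w‖ ≤ L) → ∀ {u v : ℝ}, u ∈ Icc a (b - s * h) → v ∈ Icc a b →
    ‖Δ_[h] ^[s] (Φ 0) u - h ^ s • Φ s v‖ ≤ L * h ^ s * (s * h + |u - v|)
  | 0, Φ, hΦ, hL, u, v, hu, hv => by
    simpa [← Real.norm_eq_abs] using
      (convex_Icc a b).norm_image_sub_le_of_norm_hasDerivWithin_le (hΦ 0 le_rfl) hL hv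
        (by simpa using hu)
  | s + 1, Φ, hΦ, hL, u, v, hu, hv => by
    have hL0 : 0 ≤ L := (norm_nonneg _).trans (hL v hv)
    push_cast at hu
    have hsub : Icc u (u + h) ⊆ Icc a (b - s * h) :=
      Icc_subset_Icc hu.1 (by linarith [hu.2])
    -- `g' = Δ^s Φ₁ - h^s Φ_{s+1} v` is bounded by the induction hypothesis for `Φ ∘ succ`
    set g : ℝ → E := fun w => Δ_[h] ^[s] (Φ 0) w - (w - u) • h ^ s • Φ (s + 1) v
    have hg : ∀ w ∈ Icc u (u + h),
        HasDerivWithinAt g (Δ_[h] ^[s] (Φ 1) w - h ^ s • Φ (s + 1) v) (Icc u (u + h)) w := by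
      intro w hw
      have := ((hasDerivWithinAt_fwdDiff_iter hh (hΦ 0 (Nat.zero_le _)) s (hsub hw)).mono hsub)
      simpa using this.fun_sub
        (((hasDerivWithinAt_id w _).sub_const u).smul_const (h ^ s • Φ (s + 1) v))
    have hg' : ∀ w ∈ Icc u (u + h), ‖Δ_[h] ^[s] (Φ 1) w - h ^ s • Φ (s + 1) v‖ ≤
        L * h ^ s * ((s + 1) * h + |u - v|) := by
      intro w hw
      have hwv : |w - v| ≤ h + |u - v| := calc
        |w - v| ≤ |w - u| + |u - v| := abs_sub_le _ _ _
        _ ≤ h + |u - v| := by rw [abs_of_nonneg (by linarith [hw.1])]; linarith [hw.2]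
      calc _ ≤ L * h ^ s * (s * h + |w - v|) :=
            norm_fwdDiff_iter_sub_le hh s (fun k => Φ (k + 1))
              (fun k hk => hΦ (k + 1) (by omega)) hL (hsub hw) hv
        _ ≤ _ := mul_le_mul_of_nonneg_left (by linarith) (mul_nonneg hL0 (pow_nonneg hh s))
    have mvt := (convex_Icc u (u + h)).norm_image_sub_le_of_norm_hasDerivWithin_le hg hg'
      (left_mem_Icc.2 (by linarith)) (right_mem_Icc.2 (by linarith))
    have hgdiff : g (u + h) - g u = Δ_[h] ^[s + 1] (Φ 0) u - h ^ (s + 1) • Φ (s + 1) v := by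
      simp only [g, Function.iterate_succ_apply', fwdDiff, sub_self, zero_smul, pow_succ',
        mul_smul, add_sub_cancel_left]
      abel
    rw [← hgdiff]
    refine mvt.trans (le_of_eq ?_)
    rw [add_sub_cancel_left, Real.norm_of_nonneg hh]
    push_cast
    ring

end FwdDiffEstimate

lemma one_sub_sq_div_le_descFactorial_div_pow {N s : ℕ} (hs : s ≤ N) :
    1 - (s : ℝ) ^ 2 / N ≤ N.descFactorial s / (N : ℝ) ^ s := by
  rcases Nat.eq_zero_or_pos N with rfl | hN
  · obtain rfl : s = 0 := Nat.le_zero.1 hs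
    simp
  have hN' : (0 : ℝ) < N := by exact_mod_cast hN
  have bernoulli := one_add_mul_le_pow (a := (1 - s : ℝ) / N) (by
    rw [le_div_iff₀ hN']
    have : (s : ℝ) ≤ N := by exact_mod_cast hs
    linarith) s
  have lower : ((N + 1 - s : ℕ) : ℝ) ^ s ≤ N.descFactorial s := by
    exact_mod_cast Nat.pow_sub_le_descFactorial N s
  rw [Nat.cast_sub (by omega), show ((N + 1 : ℕ) : ℝ) - s = N * (1 + (1 - s) / N) by
    field_simp; push_cast; ring, mul_pow] at lower
  rw [mul_comm] at lower
  rw [le_div_iff₀ (by positivity)]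
  refine le_trans ?_ lower
  gcongr
  refine le_trans ?_ bernoulli
  have : (s : ℝ) * ((1 - s) / N) = s / N - s ^ 2 / N := by ring
  rw [this]
  linarith [div_nonneg (Nat.cast_nonneg s) hN'.le]

lemma norm_descFactorial_smul_fwdDiff_iter_sub_le {E : Type*} [NormedAddCommGroup E]
    [NormedSpace ℝ E] {a b L : ℝ} {N s : ℕ} (hN : 0 < N) (hs : s ≤ N) {Φ : ℕ → ℝ → E}
    (hΦ : ∀ k ≤ s, ∀ w ∈ Icc a b, HasDerivWithinAt (Φ k) (Φ (k + 1) w) (Icc a b) w)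
    (hLs : ∀ w ∈ Icc a b, ‖Φ s w‖ ≤ L) (hLs' : ∀ w ∈ Icc a b, ‖Φ (s + 1) w‖ ≤ L) {u v : ℝ}
    (hu : u ∈ Icc a (b - s / N)) (hv : v ∈ Icc a b) (huv : |u - v| ≤ s / N) :
    ‖(N.descFactorial s : ℝ) • Δ_[1 / (N : ℝ)] ^[s] (Φ 0) u - Φ s v‖ ≤ L * (s ^ 2 + 2 * s) / N := by
  have hN' : (0 : ℝ) < N := by exact_mod_cast hN
  have hL0 : 0 ≤ L := (norm_nonneg _).trans (hLs v hv)
  set P : ℝ := N.descFactorial s / (N : ℝ) ^ s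
  have hP : (N.descFactorial s : ℝ) * (1 / N) ^ s = P := by rw [one_div_pow]; ring
  have hP1 : P ≤ 1 :=
    div_le_one_of_le₀ (by exact_mod_cast Nat.descFactorial_le_pow N s) (by positivity)
  have hP0 : 1 - (s : ℝ) ^ 2 / N ≤ P := one_sub_sq_div_le_descFactorial_div_pow hs
  have hdiff := norm_fwdDiff_iter_sub_le (h := 1 / N) (by positivity) s Φ hΦ hLs'
    (by rwa [mul_one_div]) hv
  calc _ = ‖(N.descFactorial s : ℝ) • (Δ_[1 / (N : ℝ)] ^[s] (Φ 0) u - (1 / (N : ℝ)) ^ s • Φ s v)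
          + (P - 1) • Φ s v‖ := by
        rw [smul_sub, smul_smul, hP, sub_smul, one_smul]; abel_nf
    _ ≤ N.descFactorial s * (L * (1 / N) ^ s * (s * (1 / N) + |u - v|)) + (1 - P) * L := by
        refine norm_add_le_of_le ?_ ?_
        · rw [norm_smul, Real.norm_natCast]
          exact mul_le_mul_of_nonneg_left hdiff (Nat.cast_nonneg _)
        · rw [norm_smul, Real.norm_of_nonpos (by linarith), neg_sub]
          exact mul_le_mul_of_nonneg_left (hLs v hv) (by linarith)
    _ = P * L * (s / N + |u - v|) + (1 - P) * L := by rw [← hP]; ring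
    _ ≤ 1 * L * (s / N + s / N) + (s ^ 2 / N) * L := by gcongr; linarith
    _ = L * (s ^ 2 + 2 * s) / N := by ring

section BernsteinError
variable {E : Type*} [NormedAddCommGroup E] [NormedSpace ℝ E] {a b K : ℝ} {φ φ' φ'' : ℝ → E}

lemma norm_sub_sub_smul_le_of_norm_deriv2_le
    (hφ : ∀ w ∈ Icc a b, HasDerivWithinAt φ (φ' w) (Icc a b) w)
    (hφ' : ∀ w ∈ Icc a b, HasDerivWithinAt φ' (φ'' w) (Icc a b) w)
    (hK : ∀ w ∈ Icc a b, ‖φ'' w‖ ≤ K) {t y : ℝ} (ht : t ∈ Icc a b) (hy : y ∈ Icc a b) :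
    ‖φ y - φ t - (y - t) • φ' t‖ ≤ K * (y - t) ^ 2 := by
  have hsub : uIcc t y ⊆ Icc a b := uIcc_subset_Icc ht hy
  have hderiv : ∀ z ∈ uIcc t y,
      HasDerivWithinAt (fun z => φ z - (z - t) • φ' t) (φ' z - φ' t) (uIcc t y) z := by
    intro z hz
    simpa using ((hφ z (hsub hz)).mono hsub).fun_sub
      (((hasDerivWithinAt_id z _).sub_const t).smul_const (φ' t))
  have hbound : ∀ z ∈ uIcc t y, ‖φ' z - φ' t‖ ≤ K * |y - t| := by
    intro z hz
    calc ‖φ' z - φ' t‖ ≤ K * ‖z - t‖ :=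
          (convex_Icc a b).norm_image_sub_le_of_norm_hasDerivWithin_le hφ' hK ht (hsub hz)
      _ ≤ K * |y - t| := by
          rw [Real.norm_eq_abs]
          exact mul_le_mul_of_nonneg_left (abs_sub_left_of_mem_uIcc hz)
            ((norm_nonneg _).trans (hK t ht))
  simpa [← sq_abs (y - t), sq, mul_assoc, sub_right_comm _ (φ t)] using
    (convex_uIcc t y).norm_image_sub_le_of_norm_hasDerivWithin_le hderiv hbound
      left_mem_uIcc right_mem_uIcc

lemma norm_bapprox_sub_le (hφ : ∀ w ∈ Icc (0 : ℝ) 1, HasDerivWithinAt φ (φ' w) (Icc 0 1) w)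
    (hφ' : ∀ w ∈ Icc (0 : ℝ) 1, HasDerivWithinAt φ' (φ'' w) (Icc 0 1) w)
    (hK : ∀ w ∈ Icc (0 : ℝ) 1, ‖φ'' w‖ ≤ K) {M : ℕ} (hM : 0 < M) {t : ℝ}
    (ht : t ∈ Icc (0 : ℝ) 1) :
    ‖bapprox M φ t - φ t‖ ≤ K * (t * (1 - t)) / M := by
  have hM' : (0 : ℝ) < M := by exact_mod_cast hM
  have mean : ∑ j ∈ range (M + 1), bern M j t * ((j : ℝ) / M - t) = 0 := by
    simp only [mul_sub, sum_sub_distrib, ← sum_mul, sum_bern, ← mul_div_assoc, ← sum_div,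
      sum_bern_mul_cast]
    field_simp
    ring
  have variance : ∑ j ∈ range (M + 1), bern M j t * ((j : ℝ) / M - t) ^ 2 = t * (1 - t) / M := by
    have : ∀ j : ℕ, bern M j t * ((j : ℝ) / M - t) ^ 2 = bern M j t * (j - M * t) ^ 2 / M ^ 2 :=
      fun j => by field_simp
    rw [sum_congr rfl fun j _ => this j, ← sum_div, sum_bern_mul_sub_sq]
    field_simp
  have taylor : bapprox M φ t - φ t = ∑ j ∈ range (M + 1),
      bern M j t • (φ (j / M) - φ t - ((j : ℝ) / M - t) • φ' t) := by
    simp only [bapprox_eq_sum_range, smul_sub, sum_sub_distrib, smul_smul, ← sum_smul, sum_bern,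
      mean, one_smul, zero_smul, sub_zero]
  calc ‖bapprox M φ t - φ t‖
      ≤ ∑ j ∈ range (M + 1), bern M j t * (K * ((j : ℝ) / M - t) ^ 2) := by
        rw [taylor]
        exact norm_sum_bern_smul_le_sum M ht fun j hj =>
          norm_sub_sub_smul_le_of_norm_deriv2_le hφ hφ' hK ht (nat_div_mem_Icc hj)
    _ = K * (t * (1 - t)) / M := by
        simp only [mul_left_comm _ K, ← mul_sum, variance]
        ring

end BernsteinError

lemma ContDiffOn.hasDerivWithinAt_iteratedDerivWithin {F : Type*} [NormedAddCommGroup F]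
    [NormedSpace ℝ F] {f : ℝ → F} {S : Set ℝ} {n : WithTop ℕ∞} {k : ℕ} (hf : ContDiffOn ℝ n f S)
    (hk : k < n) (hS : UniqueDiffOn ℝ S) {w : ℝ} (hw : w ∈ S) :
    HasDerivWithinAt (iteratedDerivWithin k f S) (iteratedDerivWithin (k + 1) f S w) S w := by
  rw [iteratedDerivWithin_succ]
  exact (hf.differentiableOn_iteratedDerivWithin hk hS w hw).hasDerivWithinAt

lemma ContDiffOn.exists_bound_iteratedDerivWithin {F : Type*} [NormedAddCommGroup F]
    [NormedSpace ℝ F] {f : ℝ → F} {S : Set ℝ} {n : ℕ} (hf : ContDiffOn ℝ n f S)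
    (hS : IsCompact S) (hS' : UniqueDiffOn ℝ S) :
    ∃ L > 0, ∀ k ≤ n, ∀ w ∈ S, ‖iteratedDerivWithin k f S w‖ ≤ L := by
  have bound : ∀ k, ∃ C, k ≤ n → ∀ w ∈ S, ‖iteratedDerivWithin k f S w‖ ≤ C := fun k => by
    by_cases hk : k ≤ n
    · obtain ⟨C, hC⟩ := hS.exists_bound_of_continuousOn
        (hf.continuousOn_iteratedDerivWithin (by exact_mod_cast hk) hS')
      exact ⟨C, fun _ => hC⟩
    · exact ⟨0, fun h => absurd h hk⟩
  choose C hC using bound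
  refine ⟨1 + ∑ k ∈ range (n + 1), |C k|, by positivity, fun k hk w hw => ?_⟩
  calc ‖iteratedDerivWithin k f S w‖ ≤ |C k| := (hC k hk w hw).trans (le_abs_self _)
    _ ≤ ∑ k ∈ range (n + 1), |C k| :=
        single_le_sum (fun i _ => abs_nonneg (C i)) (mem_range.2 (Nat.lt_succ_of_le hk))
    _ ≤ 1 + ∑ k ∈ range (n + 1), |C k| := le_add_of_nonneg_left zero_le_one

lemma norm_iteratedDeriv_bapprox_sub_le {E : Type*} [NormedAddCommGroup E] [NormedSpace ℝ E]
    {Φ : ℕ → ℝ → E} {L : ℝ} {M s : ℕ} (hM : 0 < M)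
    (hΦ : ∀ k ≤ s + 1, ∀ w ∈ Icc (0 : ℝ) 1, HasDerivWithinAt (Φ k) (Φ (k + 1) w) (Icc 0 1) w)
    (hL : ∀ k ≤ s + 2, ∀ w ∈ Icc (0 : ℝ) 1, ‖Φ k w‖ ≤ L) {t : ℝ} (ht : t ∈ Icc (0 : ℝ) 1) :
    ‖iteratedDeriv s (bapprox (M + s) (Φ 0)) t - Φ s t‖ ≤ L * (s ^ 2 + 3 * s + 1) / ↑(M + s) := by
  have hL0 : 0 ≤ L := (norm_nonneg _).trans (hL 0 (Nat.zero_le _) t ht)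
  have hnode : ∀ j ≤ M, ‖((M + s).descFactorial s : ℝ) •
      Δ_[1 / ((M + s : ℕ) : ℝ)] ^[s] (Φ 0) (j / ↑(M + s)) - Φ s (j / M)‖ ≤
      L * (s ^ 2 + 2 * s) / ↑(M + s) := fun j hj =>
    norm_descFactorial_smul_fwdDiff_iter_sub_le (by omega) (by omega)
      (fun k hk => hΦ k (by omega)) (hL s (by omega)) (hL (s + 1) (by omega))
      (nat_div_add_mem_Icc hj) (nat_div_mem_Icc hj) (abs_nat_div_add_sub_nat_div_le hj)
  have hbern : ‖bapprox M (Φ s) t - Φ s t‖ ≤ L * (s + 1) / ↑(M + s) := by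
    have hM' : (1 : ℝ) ≤ M := by exact_mod_cast hM
    calc ‖bapprox M (Φ s) t - Φ s t‖ ≤ L * (t * (1 - t)) / M :=
          norm_bapprox_sub_le (hΦ s (by omega)) (hΦ (s + 1) le_rfl) (hL (s + 2) le_rfl) hM ht
      _ ≤ L / M := by
          gcongr
          exact mul_le_of_le_one_right hL0 (by nlinarith [ht.1, ht.2])
      _ ≤ L * (s + 1) / ↑(M + s) := by
          rw [div_le_div_iff₀ (by positivity) (by positivity)]
          push_cast
          nlinarith [mul_le_mul_of_nonneg_left hM' (mul_nonneg hL0 (Nat.cast_nonneg s))]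
  rw [iteratedDeriv_bapprox (by omega), Nat.add_sub_cancel]
  calc _ = ‖∑ j ∈ range (M + 1), bern M j t • (((M + s).descFactorial s : ℝ) •
        Δ_[1 / ((M + s : ℕ) : ℝ)] ^[s] (Φ 0) (j / ↑(M + s)) - Φ s (j / M))
          + (bapprox M (Φ s) t - Φ s t)‖ := by
        rw [bapprox_eq_sum_range]
        simp only [smul_sub, sum_sub_distrib, smul_sum, smul_comm (bern M _ t)]
        abel_nf
    _ ≤ L * (s ^ 2 + 2 * s) / ↑(M + s) + L * (s + 1) / ↑(M + s) :=
        norm_add_le_of_le (norm_sum_bern_smul_le M ht hnode) hbern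
    _ = L * (s ^ 2 + 3 * s + 1) / ↑(M + s) := by ring

/-- for an `(r+2)`-times continuously differentiable function
`x : [0,1] → ℝ^n`, the first `r` derivatives of the Bernstein approximation
converge at rate `1/N`, with constants independent of `N`. -/
theorem bernstein_approx_iteratedDeriv_rate (r n : ℕ)
    (x : ℝ → EuclideanSpace ℝ (Fin n))
    (hx : ContDiffOn ℝ ((r : ℕ∞) + 2) x (Set.Icc (0:ℝ) 1)) :
    ∃ C : ℕ → ℝ, (∀ s ≤ r, 0 < C s) ∧ ∃ N₀ : ℕ, ∀ N ≥ N₀,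
      ∀ t ∈ Set.Icc (0:ℝ) 1, ∀ s ≤ r,
        ‖iteratedDeriv s (bapprox N x) t
            - iteratedDerivWithin s x (Set.Icc (0:ℝ) 1) t‖ ≤ C s / (N : ℝ) := by
  have hx' : ContDiffOn ℝ (r + 2 : ℕ) x (Icc 0 1) := by exact_mod_cast hx
  have hU : UniqueDiffOn ℝ (Icc (0 : ℝ) 1) := uniqueDiffOn_Icc zero_lt_one
  obtain ⟨L, hL0, hL⟩ := hx'.exists_bound_iteratedDerivWithin isCompact_Icc hU
  refine ⟨fun s => L * (s ^ 2 + 3 * s + 1), fun s _ => by positivity, r + 1,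
    fun N hN t ht s hs => ?_⟩
  obtain ⟨M, rfl⟩ : ∃ M, N = M + s := ⟨N - s, by omega⟩
  simpa only [iteratedDerivWithin_zero] using
    norm_iteratedDeriv_bapprox_sub_le (Φ := fun k => iteratedDerivWithin k x (Icc 0 1)) (by omega)
      (fun k hk w hw => hx'.hasDerivWithinAt_iteratedDerivWithin
        (by exact_mod_cast (by omega : k < r + 2)) hU hw)
      (fun k hk => hL k (by omega)) ht
end

section
/- Consistency of the Bernstein discretization (Theorem 2): let E : ℝ^{n_x} × ℝ^{n_x} → ℝ, F : ℝ^{n_x} × ℝ^{n_u} → ℝ, f : ℝ^{n_x} × ℝ^{n_u} → ℝ^{n_x}, e : ℝ^{n_x} × ℝ^{n_x} → ℝ^{n_e}, h : ℝ^{n_x} × ℝ^{n_u} → ℝ^{n_h} all be Lipschitz continuous. Suppose Problem P (minimize E(x(0),x(1)) + ∫_0^1 F(x(t),u(t)) dt over continuously differentiable x and continuous u subject to x′ = f(x,u), e(x(0),x(1)) = 0 and h(x(t),u(t)) ≤ 0 on [0,1]) admits an optimal solution (x*, u*) with x* ∈ C¹ and u* ∈ C⁰. Let δ_P^N = C_P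 max{W_{(x*)′}(N^{−1/2}), W_{x*}(N^{−1/2}), W_{u*}(N^{−1/2})} with C_P as in the feasibility theorem, and for each N ≥ N_1 let (x̄*_N, ū*_N) be coefficient matrices minimizing the discrete cost E(x_N(0), x_N(1)) + (1/(N+1)) Σ_{j=0}^N F(x_N(j/N), u_N(j/N)) over all coefficients whose Bernstein polynomials x_N, u_N satisfy ‖x_N′(j/N) − f(x_N(j/N),u_N(j/N))‖ ≤ δ_P^N, e(x_N(0),x_N(1)) = 0 and h(x_N(j/N),u_N(j/N)) ≤ δ_P^N·1 at all nodes j = 0,…,N. If the resulting optimal Bernstein polynomials (x*_N, u*_N) converge uniformly on [0,1] (together with the derivatives (x*_N)′) to a pair (x^∞, u^∞) with (x^∞)′ and u^∞ continuous, then (x^∞, u^∞) is feasible for Problem P and E(x^∞(0),x^∞(1)) + ∫_0^1 F(x^∞,u^∞) dt = E(x*(0),x*(1)) + ∫_0^1 F(x*,u*) dt, i.e. (x^∞, u^∞) is an optimal solution of Problem P. -/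
/-!
The limit pair is feasible because each discrete constraint is violated at the nodes `j/N` by at
most `δ_N`, and `δ_N → 0` since moduli of continuity of continuous functions on `[0,1]` vanish at
`0`. Uniform convergence, continuity of the limit, and the fact that every `t ∈ [0,1]` is a limit
of nodes `⌊tN⌋/N` carry these node-wise bounds to all of `[0,1]`.

It is optimal because the Bernstein polynomials interpolating `x*` and `u*` at the nodes are
feasible for `P_N`, so the discrete optimum costs at most as much as they do. Both discrete costs
converge to the continuous ones (the node averages are Riemann sums of uniformly convergent
integrands, and Bernstein polynomials converge uniformly), so the cost of `(x^∞, u^∞)` is at most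
that of `(x*, u*)`; the reverse inequality is the optimality of `(x*, u*)`.
-/

open scoped BigOperators

/-- The modulus of continuity on `[0,1]` of a function `g`. -/
noncomputable def modCont {E : Type*} [NormedAddCommGroup E] (g : ℝ → E) (δ : ℝ) : ℝ :=
  sSup {d : ℝ | ∃ s t : ℝ, s ∈ Set.Icc (0:ℝ) 1 ∧ t ∈ Set.Icc (0:ℝ) 1 ∧
    |s - t| ≤ δ ∧ d = ‖g s - g t‖}

/-- The Bernstein polynomial with coefficient matrix `c`. -/
noncomputable def bpoly {E : Type*} [AddCommMonoid E] [Module ℝ E]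
    (N : ℕ) (c : Fin (N + 1) → E) (t : ℝ) : E :=
  ∑ j : Fin (N + 1), bern N (j : ℕ) t • c j

variable {nx nu ne nh : ℕ}

/-- Feasibility for Problem `P`: `x` is continuously differentiable with derivative `x'`,
`u` is continuous, and the dynamics, boundary and inequality constraints hold. -/
def PFeasible
    (f : EuclideanSpace ℝ (Fin nx) × EuclideanSpace ℝ (Fin nu) → EuclideanSpace ℝ (Fin nx))
    (e : EuclideanSpace ℝ (Fin nx) × EuclideanSpace ℝ (Fin nx) → EuclideanSpace ℝ (Fin ne))
    (h : EuclideanSpace ℝ (Fin nx) × EuclideanSpace ℝ (Fin nu) → EuclideanSpace ℝ (Fin nh))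
    (x x' : ℝ → EuclideanSpace ℝ (Fin nx)) (u : ℝ → EuclideanSpace ℝ (Fin nu)) : Prop :=
  (∀ t ∈ Set.Icc (0:ℝ) 1, HasDerivWithinAt x (x' t) (Set.Icc (0:ℝ) 1) t) ∧
  ContinuousOn x' (Set.Icc (0:ℝ) 1) ∧ ContinuousOn u (Set.Icc (0:ℝ) 1) ∧
  (∀ t ∈ Set.Icc (0:ℝ) 1, x' t = f (x t, u t)) ∧
  e (x 0, x 1) = 0 ∧
  (∀ t ∈ Set.Icc (0:ℝ) 1, ∀ i, h (x t, u t) i ≤ 0)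

/-- The cost of Problem `P`. -/
noncomputable def PCost
    (Ecost : EuclideanSpace ℝ (Fin nx) × EuclideanSpace ℝ (Fin nx) → ℝ)
    (F : EuclideanSpace ℝ (Fin nx) × EuclideanSpace ℝ (Fin nu) → ℝ)
    (x : ℝ → EuclideanSpace ℝ (Fin nx)) (u : ℝ → EuclideanSpace ℝ (Fin nu)) : ℝ :=
  Ecost (x 0, x 1) + ∫ t in (0:ℝ)..1, F (x t, u t)

/-- Feasibility for the discretized Problem `P_N` with relaxation bound `δ`:
the Bernstein polynomials with coefficients `c`, `d` satisfy the relaxed dynamics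
and inequality constraints at all nodes `j/N` and the exact boundary condition. -/
def DiscFeasible
    (f : EuclideanSpace ℝ (Fin nx) × EuclideanSpace ℝ (Fin nu) → EuclideanSpace ℝ (Fin nx))
    (e : EuclideanSpace ℝ (Fin nx) × EuclideanSpace ℝ (Fin nx) → EuclideanSpace ℝ (Fin ne))
    (h : EuclideanSpace ℝ (Fin nx) × EuclideanSpace ℝ (Fin nu) → EuclideanSpace ℝ (Fin nh))
    (δ : ℝ) (N : ℕ) (c : Fin (N + 1) → EuclideanSpace ℝ (Fin nx))
    (d : Fin (N + 1) → EuclideanSpace ℝ (Fin nu)) : Prop :=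
  (∀ j : ℕ, j ≤ N →
    ‖deriv (bpoly N c) ((j : ℝ) / (N : ℝ))
        - f (bpoly N c ((j : ℝ) / (N : ℝ)), bpoly N d ((j : ℝ) / (N : ℝ)))‖ ≤ δ) ∧
  e (bpoly N c 0, bpoly N c 1) = 0 ∧
  (∀ j : ℕ, j ≤ N → ∀ i,
    h (bpoly N c ((j : ℝ) / (N : ℝ)), bpoly N d ((j : ℝ) / (N : ℝ))) i ≤ δ)

/-- The discretized cost of Problem `P_N`. -/
noncomputable def DiscCost
    (Ecost : EuclideanSpace ℝ (Fin nx) × EuclideanSpace ℝ (Fin nx) → ℝ)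
    (F : EuclideanSpace ℝ (Fin nx) × EuclideanSpace ℝ (Fin nu) → ℝ)
    (N : ℕ) (c : Fin (N + 1) → EuclideanSpace ℝ (Fin nx))
    (d : Fin (N + 1) → EuclideanSpace ℝ (Fin nu)) : ℝ :=
  Ecost (bpoly N c 0, bpoly N c 1) +
    ((N : ℝ) + 1)⁻¹ *
      ∑ j ∈ Finset.range (N + 1),
        F (bpoly N c ((j : ℝ) / (N : ℝ)), bpoly N d ((j : ℝ) / (N : ℝ)))

open Filter Topology Set

theorem modCont_nonneg {E : Type*} [NormedAddCommGroup E] (g : ℝ → E) (δ : ℝ) :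
    0 ≤ modCont g δ :=
  Real.sSup_nonneg <| by rintro _ ⟨s, t, -, -, -, rfl⟩; exact norm_nonneg _

theorem tendsto_modCont_zero {E : Type*} [NormedAddCommGroup E] {g : ℝ → E}
    (hg : ContinuousOn g (Icc 0 1)) : Tendsto (modCont g) (𝓝 0) (𝓝 0) := by
  rw [Metric.tendsto_nhds_nhds]
  intro ε hε
  obtain ⟨η, hη, hgη⟩ := Metric.uniformContinuousOn_iff_le.1
    (isCompact_Icc.uniformContinuousOn_of_continuous hg) (ε / 2) (half_pos hε)
  refine ⟨η, hη, fun r hr => ?_⟩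
  rw [Real.dist_0_eq_abs, abs_lt] at hr
  have hle : modCont g r ≤ ε / 2 := by
    refine Real.sSup_le ?_ (half_pos hε).le
    rintro _ ⟨s, t, hs, ht, hst, rfl⟩
    rw [← dist_eq_norm]
    exact hgη s hs t ht (by rw [Real.dist_eq]; linarith)
  rw [Real.dist_0_eq_abs, abs_of_nonneg (modCont_nonneg g r)]
  linarith

theorem node_mem_Icc {j N : ℕ} (hj : j ≤ N) : (j : ℝ) / N ∈ Icc (0 : ℝ) 1 :=
  ⟨by positivity, div_le_one_of_le₀ (by exact_mod_cast hj) (Nat.cast_nonneg N)⟩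

theorem floor_mul_le_of_mem_Icc {t : ℝ} (ht : t ∈ Icc (0 : ℝ) 1) (N : ℕ) : ⌊t * N⌋₊ ≤ N :=
  Nat.floor_le_of_le (mul_le_of_le_one_left (Nat.cast_nonneg N) ht.2)

theorem tendsto_floor_node {t : ℝ} (ht : t ∈ Icc (0 : ℝ) 1) :
    Tendsto (fun N : ℕ => (⌊t * N⌋₊ : ℝ) / N) atTop (𝓝[Icc 0 1] t) :=
  tendsto_nhdsWithin_iff.2
    ⟨(tendsto_nat_floor_mul_div_atTop ht.1).comp tendsto_natCast_atTop_atTop,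
      Eventually.of_forall fun N => node_mem_Icc (floor_mul_le_of_mem_Icc ht N)⟩

theorem nonpos_of_tendstoUniformlyOn_of_nodes {G : ℕ → ℝ → ℝ} {g : ℝ → ℝ} {δ : ℕ → ℝ}
    (hG : TendstoUniformlyOn G g atTop (Icc 0 1)) (hg : ContinuousOn g (Icc 0 1))
    (hδ : Tendsto δ atTop (𝓝 0))
    (hnodes : ∀ᶠ N in atTop, ∀ j : ℕ, j ≤ N → G N ((j : ℝ) / N) ≤ δ N) :
    ∀ t ∈ Icc (0 : ℝ) 1, g t ≤ 0 := fun t ht =>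
  le_of_tendsto_of_tendsto (hG.tendsto_comp (hg t ht) (tendsto_floor_node ht)) hδ <|
    hnodes.mono fun N hN => hN _ (floor_mul_le_of_mem_Icc ht N)

theorem TendstoUniformlyOn.prodMk_diag {ι α β γ : Type*} [UniformSpace β] [UniformSpace γ]
    {F : ι → α → β} {G : ι → α → γ} {f : α → β} {g : α → γ} {p : Filter ι} {s : Set α}
    (hF : TendstoUniformlyOn F f p s) (hG : TendstoUniformlyOn G g p s) :
    TendstoUniformlyOn (fun i a => (F i a, G i a)) (fun a => (f a, g a)) p s :=
  fun u hu => tendsto_diag.eventually (hF.prodMk hG u hu)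

theorem tendstoUniformlyOn_bpoly_sample {E : Type*} [NormedAddCommGroup E] [NormedSpace ℝ E]
    {g : ℝ → E} (hg : ContinuousOn g (Icc 0 1)) :
    TendstoUniformlyOn (fun N => bpoly N (fun j : Fin (N + 1) => g ((j : ℕ) / (N : ℝ)))) g
      atTop (Icc 0 1) := by
  let G : C(unitInterval, E) := ⟨(Icc 0 1).domRestrict g, hg.domRestrict⟩
  have hG : TendstoUniformly (fun N => bernsteinApproximation N G) G atTop :=
    ContinuousMap.tendsto_iff_tendstoUniformly.1 (bernsteinApproximation_uniform G)
  rw [tendstoUniformlyOn_iff_tendstoUniformly_comp_coe]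
  convert hG using 1
  · funext N t
    simp [bernsteinApproximation.apply, bpoly, bern, bernstein_apply, G, bernstein.z]
  · rfl

theorem abs_intervalIntegral_sub_le {φ : ℝ → ℝ} {a b ε : ℝ} (hab : a ≤ b)
    (hε : ∀ t ∈ Ioc a b, |φ a - φ t| ≤ ε) : |∫ t in a..b, (φ a - φ t)| ≤ ε * (b - a) := by
  refine (intervalIntegral.norm_integral_le_of_norm_le_const
    (f := fun t => φ a - φ t) fun t ht => hε t (uIoc_of_le hab ▸ ht)).trans_eq ?_
  rw [abs_of_nonneg (sub_nonneg.2 hab)]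

theorem abs_leftRiemannSum_sub_integral_le {φ : ℝ → ℝ} (hφ : ContinuousOn φ (Icc 0 1))
    {N : ℕ} (hN : 0 < N) {ε : ℝ}
    (hε : ∀ s ∈ Icc (0 : ℝ) 1, ∀ t ∈ Icc (0 : ℝ) 1, |s - t| ≤ (N : ℝ)⁻¹ → |φ s - φ t| ≤ ε) :
    |(N : ℝ)⁻¹ * ∑ j ∈ Finset.range N, φ ((j : ℝ) / N) - ∫ t in (0 : ℝ)..1, φ t| ≤ ε := by
  set a : ℕ → ℝ := fun j => (j : ℝ) / N with ha
  have hNR : (0 : ℝ) < N := Nat.cast_pos.2 hN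
  have ha_succ (j : ℕ) : a (j + 1) = a j + (N : ℝ)⁻¹ := by
    simp only [ha]; push_cast; field_simp
  have ha_le (j : ℕ) : a j ≤ a (j + 1) := by rw [ha_succ]; simp [hNR.le]
  have hsub {j : ℕ} (hj : j < N) : Icc (a j) (a (j + 1)) ⊆ Icc 0 1 :=
    Icc_subset_Icc (node_mem_Icc hj.le).1 (node_mem_Icc hj).2
  have hint {j : ℕ} (hj : j < N) : IntervalIntegrable φ MeasureTheory.volume (a j) (a (j + 1)) :=
    (hφ.mono (by rw [uIcc_of_le (ha_le j)]; exact hsub hj)).intervalIntegrable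
  have hsplit : ∫ t in (0 : ℝ)..1, φ t = ∑ j ∈ Finset.range N, ∫ t in a j..a (j + 1), φ t := by
    rw [intervalIntegral.sum_integral_adjacent_intervals (a := a) (n := N) fun j hj => hint hj]
    simp [ha, hNR.ne']
  have hterm {j : ℕ} (hj : j < N) : (N : ℝ)⁻¹ * φ (a j) - ∫ t in a j..a (j + 1), φ t =
      ∫ t in a j..a (j + 1), (φ (a j) - φ t) := by
    rw [intervalIntegral.integral_sub intervalIntegrable_const (hint hj),
      intervalIntegral.integral_const, ha_succ, smul_eq_mul]
    ring
  have hbound {j : ℕ} (hj : j < N) :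
      |∫ t in a j..a (j + 1), (φ (a j) - φ t)| ≤ ε * (N : ℝ)⁻¹ := by
    refine (abs_intervalIntegral_sub_le (ha_le j) fun t ht => ?_).trans_eq
      (by rw [ha_succ, add_sub_cancel_left])
    refine hε _ (hsub hj ⟨le_rfl, ha_le j⟩) _ (hsub hj ⟨ht.1.le, ht.2⟩) ?_
    rw [abs_sub_comm, abs_of_nonneg (by linarith [ht.1])]
    linarith [ht.2, ha_succ j]
  calc |(N : ℝ)⁻¹ * ∑ j ∈ Finset.range N, φ (a j) - ∫ t in (0 : ℝ)..1, φ t|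
      = |∑ j ∈ Finset.range N, ∫ t in a j..a (j + 1), (φ (a j) - φ t)| := by
        rw [hsplit, Finset.mul_sum, ← Finset.sum_sub_distrib,
          Finset.sum_congr rfl fun j hj => hterm (Finset.mem_range.1 hj)]
    _ ≤ ∑ j ∈ Finset.range N, |∫ t in a j..a (j + 1), (φ (a j) - φ t)| :=
        Finset.abs_sum_le_sum_abs _ _
    _ ≤ ∑ _j ∈ Finset.range N, ε * (N : ℝ)⁻¹ :=
        Finset.sum_le_sum fun j hj => hbound (Finset.mem_range.1 hj)
    _ = ε := by rw [Finset.sum_const, Finset.card_range, nsmul_eq_mul]; field_simp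

theorem tendsto_leftRiemannSum {φ : ℝ → ℝ} (hφ : ContinuousOn φ (Icc 0 1)) :
    Tendsto (fun N : ℕ => (N : ℝ)⁻¹ * ∑ j ∈ Finset.range N, φ ((j : ℝ) / N)) atTop
      (𝓝 (∫ t in (0 : ℝ)..1, φ t)) := by
  rw [Metric.tendsto_atTop]
  intro ε hε
  obtain ⟨η, hη, hφη⟩ := Metric.uniformContinuousOn_iff_le.1
    (isCompact_Icc.uniformContinuousOn_of_continuous hφ) (ε / 2) (half_pos hε)
  obtain ⟨N₀, hN₀⟩ := exists_nat_one_div_lt hη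
  refine ⟨N₀ + 1, fun N hN => ?_⟩
  have hNη : (N : ℝ)⁻¹ ≤ η := by
    rw [inv_eq_one_div]
    refine le_trans ?_ hN₀.le
    gcongr
    exact_mod_cast hN
  rw [Real.dist_eq]
  refine lt_of_le_of_lt (abs_leftRiemannSum_sub_integral_le hφ (by omega) ?_) (half_lt_self hε)
  exact fun s hs t ht hst => hφη s hs t ht (by rw [Real.dist_eq]; linarith)

theorem tendsto_riemannSum {φ : ℝ → ℝ} (hφ : ContinuousOn φ (Icc 0 1)) :
    Tendsto (fun N : ℕ => ((N : ℝ) + 1)⁻¹ * ∑ j ∈ Finset.range (N + 1), φ ((j : ℝ) / N)) atTop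
      (𝓝 (∫ t in (0 : ℝ)..1, φ t)) := by
  have hlim := ((tendsto_natCast_div_add_atTop (1 : ℝ)).mul (tendsto_leftRiemannSum hφ)).add
    ((tendsto_one_div_add_atTop_nhds_zero_nat (𝕜 := ℝ)).mul_const (φ 1))
  rw [one_mul, zero_mul, add_zero] at hlim
  -- `(N+1)⁻¹ ∑_{j ≤ N} φ (j/N) = N/(N+1) · (N⁻¹ ∑_{j < N} φ (j/N)) + φ 1/(N+1)` once `N ≠ 0`
  refine hlim.congr' ((eventually_gt_atTop 0).mono fun N hN => ?_)
  have hNR : (N : ℝ) ≠ 0 := Nat.cast_ne_zero.2 hN.ne'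
  dsimp only
  rw [Finset.sum_range_succ, div_self hNR]
  field_simp

theorem tendsto_riemannSum_of_tendstoUniformlyOn {Φ : ℕ → ℝ → ℝ} {φ : ℝ → ℝ}
    (hφ : ContinuousOn φ (Icc 0 1)) (hΦ : TendstoUniformlyOn Φ φ atTop (Icc 0 1)) :
    Tendsto (fun N : ℕ => ((N : ℝ) + 1)⁻¹ * ∑ j ∈ Finset.range (N + 1), Φ N ((j : ℝ) / N))
      atTop (𝓝 (∫ t in (0 : ℝ)..1, φ t)) := by
  have herr : Tendsto (fun N : ℕ => ((N : ℝ) + 1)⁻¹ *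
      ∑ j ∈ Finset.range (N + 1), (Φ N ((j : ℝ) / N) - φ ((j : ℝ) / N))) atTop (𝓝 0) := by
    rw [Metric.tendsto_nhds]
    intro ε hε
    filter_upwards [Metric.tendstoUniformlyOn_iff.1 hΦ (ε / 2) (half_pos hε)] with N hN
    have hterm : ∀ j ∈ Finset.range (N + 1), |Φ N ((j : ℝ) / N) - φ ((j : ℝ) / N)| ≤ ε / 2 :=
      fun j hj => by
        rw [abs_sub_comm, ← Real.dist_eq]
        exact (hN _ (node_mem_Icc (Finset.mem_range_succ_iff.1 hj))).le
    have hpos : (0 : ℝ) < N + 1 := by positivity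
    calc dist (((N : ℝ) + 1)⁻¹ *
          ∑ j ∈ Finset.range (N + 1), (Φ N ((j : ℝ) / N) - φ ((j : ℝ) / N))) 0
        ≤ ((N : ℝ) + 1)⁻¹ * ∑ j ∈ Finset.range (N + 1), |Φ N ((j : ℝ) / N) - φ ((j : ℝ) / N)| := by
          rw [Real.dist_0_eq_abs, abs_mul, abs_of_pos (inv_pos.2 hpos)]
          gcongr
          exact Finset.abs_sum_le_sum_abs _ _
      _ ≤ ((N : ℝ) + 1)⁻¹ * ∑ _j ∈ Finset.range (N + 1), ε / 2 := by
          gcongr with j hj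
          exact hterm j hj
      _ < ε := by
          rw [Finset.sum_const, Finset.card_range, nsmul_eq_mul]
          push_cast
          field_simp
          linarith
  have := (tendsto_riemannSum hφ).add herr
  rw [add_zero] at this
  refine this.congr fun N => ?_
  rw [← mul_add, ← Finset.sum_add_distrib]
  simp

theorem tendsto_discCost
    {Ecost : EuclideanSpace ℝ (Fin nx) × EuclideanSpace ℝ (Fin nx) → ℝ}
    {F : EuclideanSpace ℝ (Fin nx) × EuclideanSpace ℝ (Fin nu) → ℝ}
    (hE : Continuous Ecost) (hF : UniformContinuous F)
    {c : (N : ℕ) → Fin (N + 1) → EuclideanSpace ℝ (Fin nx)}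
    {d : (N : ℕ) → Fin (N + 1) → EuclideanSpace ℝ (Fin nu)}
    {x : ℝ → EuclideanSpace ℝ (Fin nx)} {u : ℝ → EuclideanSpace ℝ (Fin nu)}
    (hx : ContinuousOn x (Icc 0 1)) (hu : ContinuousOn u (Icc 0 1))
    (hcx : TendstoUniformlyOn (fun N => bpoly N (c N)) x atTop (Icc 0 1))
    (hdu : TendstoUniformlyOn (fun N => bpoly N (d N)) u atTop (Icc 0 1)) :
    Tendsto (fun N => DiscCost Ecost F N (c N) (d N)) atTop (𝓝 (PCost Ecost F x u)) := by
  have hboundary : Tendsto (fun N => Ecost (bpoly N (c N) 0, bpoly N (c N) 1)) atTop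
      (𝓝 (Ecost (x 0, x 1))) :=
    (hE.tendsto _).comp ((hcx.tendsto_at (left_mem_Icc.2 zero_le_one)).prodMk_nhds
      (hcx.tendsto_at (right_mem_Icc.2 zero_le_one)))
  have hsum := tendsto_riemannSum_of_tendstoUniformlyOn
    (Φ := fun N t => F (bpoly N (c N) t, bpoly N (d N) t))
    (hF.continuous.comp_continuousOn (hx.prodMk hu))
    (hF.comp_tendstoUniformlyOn (hcx.prodMk_diag hdu))
  exact hboundary.add hsum

theorem pFeasible_of_tendstoUniformlyOn
    {f : EuclideanSpace ℝ (Fin nx) × EuclideanSpace ℝ (Fin nu) → EuclideanSpace ℝ (Fin nx)}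
    {e : EuclideanSpace ℝ (Fin nx) × EuclideanSpace ℝ (Fin nx) → EuclideanSpace ℝ (Fin ne)}
    {h : EuclideanSpace ℝ (Fin nx) × EuclideanSpace ℝ (Fin nu) → EuclideanSpace ℝ (Fin nh)}
    (hf : UniformContinuous f) (he : Continuous e) (hh : UniformContinuous h)
    {δ : ℕ → ℝ} (hδ : Tendsto δ atTop (𝓝 0))
    {c : (N : ℕ) → Fin (N + 1) → EuclideanSpace ℝ (Fin nx)}
    {d : (N : ℕ) → Fin (N + 1) → EuclideanSpace ℝ (Fin nu)}
    (hcd : ∀ᶠ N in atTop, DiscFeasible f e h (δ N) N (c N) (d N))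
    {x v : ℝ → EuclideanSpace ℝ (Fin nx)} {u : ℝ → EuclideanSpace ℝ (Fin nu)}
    (hcx : TendstoUniformlyOn (fun N => bpoly N (c N)) x atTop (Icc 0 1))
    (hcv : TendstoUniformlyOn (fun N => deriv (bpoly N (c N))) v atTop (Icc 0 1))
    (hdu : TendstoUniformlyOn (fun N => bpoly N (d N)) u atTop (Icc 0 1))
    (hxv : ∀ t ∈ Icc (0 : ℝ) 1, HasDerivWithinAt x (v t) (Icc 0 1) t)
    (hv : ContinuousOn v (Icc 0 1)) (hu : ContinuousOn u (Icc 0 1)) :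
    PFeasible f e h x v u := by
  have hx : ContinuousOn x (Icc 0 1) := fun t ht => (hxv t ht).continuousWithinAt
  have hxu := hcx.prodMk_diag hdu
  refine ⟨hxv, hv, hu, fun t ht => ?_, ?_, fun t ht i => ?_⟩
  · have hdefect_uc : UniformContinuous fun p : EuclideanSpace ℝ (Fin nx) ×
        (EuclideanSpace ℝ (Fin nx) × EuclideanSpace ℝ (Fin nu)) => ‖p.1 - f p.2‖ :=
      uniformContinuous_norm.comp (uniformContinuous_fst.sub (hf.comp uniformContinuous_snd))
    have hconv : TendstoUniformlyOn
        (fun N t => ‖deriv (bpoly N (c N)) t - f (bpoly N (c N) t, bpoly N (d N) t)‖)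
        (fun t => ‖v t - f (x t, u t)‖) atTop (Icc 0 1) :=
      -- elaborated before unification with the stated type, which is otherwise very slow
      (hdefect_uc.comp_tendstoUniformlyOn (hcv.prodMk_diag hxu) :)
    have hdefect : ∀ t ∈ Icc (0 : ℝ) 1, ‖v t - f (x t, u t)‖ ≤ 0 :=
      nonpos_of_tendstoUniformlyOn_of_nodes hconv
        (hv.sub (hf.continuous.comp_continuousOn (hx.prodMk hu))).norm hδ
        (hcd.mono fun N hN => hN.1)
    exact sub_eq_zero.1 (norm_le_zero_iff.1 (hdefect t ht))
  · have hlim : Tendsto (fun N => e (bpoly N (c N) 0, bpoly N (c N) 1)) atTop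
        (𝓝 (e (x 0, x 1))) :=
      (he.tendsto _).comp ((hcx.tendsto_at (left_mem_Icc.2 zero_le_one)).prodMk_nhds
        (hcx.tendsto_at (right_mem_Icc.2 zero_le_one)))
    exact tendsto_nhds_unique hlim (tendsto_const_nhds.congr' (hcd.mono fun N hN => hN.2.1.symm))
  · have hhi : UniformContinuous fun p => h p i :=
      (EuclideanSpace.proj (𝕜 := ℝ) i).uniformContinuous.comp hh
    exact nonpos_of_tendstoUniformlyOn_of_nodes (hhi.comp_tendstoUniformlyOn hxu)
      (hhi.continuous.comp_continuousOn (hx.prodMk hu)) hδ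
      (hcd.mono fun N hN => fun j hj => hN.2.2 j hj i) t ht

theorem bernstein_discretization_consistency_general
    (nx nu ne nh : ℕ)
    (Ecost : EuclideanSpace ℝ (Fin nx) × EuclideanSpace ℝ (Fin nx) → ℝ)
    (F : EuclideanSpace ℝ (Fin nx) × EuclideanSpace ℝ (Fin nu) → ℝ)
    (f : EuclideanSpace ℝ (Fin nx) × EuclideanSpace ℝ (Fin nu) → EuclideanSpace ℝ (Fin nx))
    (e : EuclideanSpace ℝ (Fin nx) × EuclideanSpace ℝ (Fin nx) → EuclideanSpace ℝ (Fin ne))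
    (h : EuclideanSpace ℝ (Fin nx) × EuclideanSpace ℝ (Fin nu) → EuclideanSpace ℝ (Fin nh))
    (LE LF Lf Le Lh : NNReal)
    (hE : LipschitzWith LE Ecost) (hF : LipschitzWith LF F) (hf : LipschitzWith Lf f)
    (he : LipschitzWith Le e) (hh : LipschitzWith Lh h)
    -- the optimal solution of Problem P
    (xs xs' : ℝ → EuclideanSpace ℝ (Fin nx)) (us : ℝ → EuclideanSpace ℝ (Fin nu))
    (hfeas : PFeasible f e h xs xs' us)
    (hopt : ∀ (x x' : ℝ → EuclideanSpace ℝ (Fin nx)) (u : ℝ → EuclideanSpace ℝ (Fin nu)),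
      PFeasible f e h x x' u → PCost Ecost F xs us ≤ PCost Ecost F x u)
    -- the relaxation bound δ_P^N, with C_P as in the feasibility theorem
    (CP : ℝ)
    (δ : ℕ → ℝ)
    (hδ : ∀ N : ℕ, δ N = CP * max (modCont xs' ((N : ℝ) ^ (-(1/2 : ℝ))))
        (max (modCont xs ((N : ℝ) ^ (-(1/2 : ℝ)))) (modCont us ((N : ℝ) ^ (-(1/2 : ℝ))))))
    (N₁ : ℕ)
    (hBfeas : ∀ N : ℕ, N₁ ≤ N → DiscFeasible f e h (δ N) N
        (fun j : Fin (N + 1) => xs (((j : ℕ) : ℝ) / (N : ℝ)))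
        (fun j : Fin (N + 1) => us (((j : ℕ) : ℝ) / (N : ℝ))))
    -- the optimal solutions of the discretized problems P_N
    (cN : (N : ℕ) → Fin (N + 1) → EuclideanSpace ℝ (Fin nx))
    (dN : (N : ℕ) → Fin (N + 1) → EuclideanSpace ℝ (Fin nu))
    (hNfeas : ∀ N : ℕ, N₁ ≤ N → DiscFeasible f e h (δ N) N (cN N) (dN N))
    (hNopt : ∀ N : ℕ, N₁ ≤ N → ∀ c d, DiscFeasible f e h (δ N) N c d →
      DiscCost Ecost F N (cN N) (dN N) ≤ DiscCost Ecost F N c d)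
    -- the uniform accumulation point
    (xinf vinf : ℝ → EuclideanSpace ℝ (Fin nx)) (uinf : ℝ → EuclideanSpace ℝ (Fin nu))
    (hconvx : TendstoUniformlyOn (fun N => bpoly N (cN N)) xinf
      Filter.atTop (Set.Icc (0:ℝ) 1))
    (hconvx' : TendstoUniformlyOn (fun N => deriv (bpoly N (cN N))) vinf
      Filter.atTop (Set.Icc (0:ℝ) 1))
    (hconvu : TendstoUniformlyOn (fun N => bpoly N (dN N)) uinf
      Filter.atTop (Set.Icc (0:ℝ) 1))
    (hxinfd : ∀ t ∈ Set.Icc (0:ℝ) 1, HasDerivWithinAt xinf (vinf t) (Set.Icc (0:ℝ) 1) t)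
    (hvinf : ContinuousOn vinf (Set.Icc (0:ℝ) 1))
    (huinf : ContinuousOn uinf (Set.Icc (0:ℝ) 1)) :
    PFeasible f e h xinf vinf uinf ∧
      PCost Ecost F xinf uinf = PCost Ecost F xs us := by
  obtain ⟨hxs_deriv, hxs'_cont, hus_cont, -, -, -⟩ := hfeas
  have hxs_cont : ContinuousOn xs (Icc 0 1) := fun t ht => (hxs_deriv t ht).continuousWithinAt
  have hxinf_cont : ContinuousOn xinf (Icc 0 1) := fun t ht => (hxinfd t ht).continuousWithinAt
  have hδ0 : Tendsto δ atTop (𝓝 0) := by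
    have hr : Tendsto (fun N : ℕ => (N : ℝ) ^ (-(1 / 2 : ℝ))) atTop (𝓝 0) :=
      (tendsto_rpow_neg_atTop (by norm_num)).comp tendsto_natCast_atTop_atTop
    have hW := ((tendsto_modCont_zero hxs'_cont).comp hr).max
      (((tendsto_modCont_zero hxs_cont).comp hr).max ((tendsto_modCont_zero hus_cont).comp hr))
    simpa [funext hδ] using hW.const_mul CP
  have hfeas_inf : PFeasible f e h xinf vinf uinf :=
    pFeasible_of_tendstoUniformlyOn hf.uniformContinuous he.continuous hh.uniformContinuous hδ0
      (eventually_atTop.2 ⟨N₁, hNfeas⟩) hconvx hconvx' hconvu hxinfd hvinf huinf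
  have hcost_le : PCost Ecost F xinf uinf ≤ PCost Ecost F xs us :=
    le_of_tendsto_of_tendsto
      (tendsto_discCost hE.continuous hF.uniformContinuous hxinf_cont huinf hconvx hconvu)
      (tendsto_discCost hE.continuous hF.uniformContinuous hxs_cont hus_cont
        (tendstoUniformlyOn_bpoly_sample hxs_cont) (tendstoUniformlyOn_bpoly_sample hus_cont))
      (eventually_atTop.2 ⟨N₁, fun N hN => hNopt N hN _ _ (hBfeas N hN)⟩)
  exact ⟨hfeas_inf, hcost_le.antisymm (hopt xinf vinf uinf hfeas_inf)⟩

/-- Theorem 2, Consistency: if the optimal Bernstein polynomials of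
Problem `P_N` (with relaxation bound `δ_P^N = C_P·max{W_{x*'}, W_{x*}, W_{u*}}(N^{-1/2})`,
`C_P` as in the feasibility theorem) converge uniformly, together with their
derivatives, to a pair `(x^∞, u^∞)` with continuous derivative and control, then
`(x^∞, u^∞)` is feasible for Problem `P` and achieves the optimal cost of Problem `P`. -/
theorem bernstein_discretization_consistency
    (nx nu ne nh : ℕ)
    (Ecost : EuclideanSpace ℝ (Fin nx) × EuclideanSpace ℝ (Fin nx) → ℝ)
    (F : EuclideanSpace ℝ (Fin nx) × EuclideanSpace ℝ (Fin nu) → ℝ)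
    (f : EuclideanSpace ℝ (Fin nx) × EuclideanSpace ℝ (Fin nu) → EuclideanSpace ℝ (Fin nx))
    (e : EuclideanSpace ℝ (Fin nx) × EuclideanSpace ℝ (Fin nx) → EuclideanSpace ℝ (Fin ne))
    (h : EuclideanSpace ℝ (Fin nx) × EuclideanSpace ℝ (Fin nu) → EuclideanSpace ℝ (Fin nh))
    (LE LF Lf Le Lh : NNReal)
    (hE : LipschitzWith LE Ecost) (hF : LipschitzWith LF F) (hf : LipschitzWith Lf f)
    (he : LipschitzWith Le e) (hh : LipschitzWith Lh h)
    -- the optimal solution of Problem P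
    (xs xs' : ℝ → EuclideanSpace ℝ (Fin nx)) (us : ℝ → EuclideanSpace ℝ (Fin nu))
    (hfeas : PFeasible f e h xs xs' us)
    (hopt : ∀ (x x' : ℝ → EuclideanSpace ℝ (Fin nx)) (u : ℝ → EuclideanSpace ℝ (Fin nu)),
      PFeasible f e h x x' u → PCost Ecost F xs us ≤ PCost Ecost F x u)
    -- the relaxation bound δ_P^N, with C_P as in the feasibility theorem
    (CP : ℝ) (hCP : 0 < CP)
    (δ : ℕ → ℝ)
    (hδ : ∀ N : ℕ, δ N = CP * max (modCont xs' ((N : ℝ) ^ (-(1/2 : ℝ))))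
        (max (modCont xs ((N : ℝ) ^ (-(1/2 : ℝ)))) (modCont us ((N : ℝ) ^ (-(1/2 : ℝ))))))
    (N₁ : ℕ)
    (hBfeas : ∀ N : ℕ, N₁ ≤ N → DiscFeasible f e h (δ N) N
        (fun j : Fin (N + 1) => xs (((j : ℕ) : ℝ) / (N : ℝ)))
        (fun j : Fin (N + 1) => us (((j : ℕ) : ℝ) / (N : ℝ))))
    -- the optimal solutions of the discretized problems P_N
    (cN : (N : ℕ) → Fin (N + 1) → EuclideanSpace ℝ (Fin nx))
    (dN : (N : ℕ) → Fin (N + 1) → EuclideanSpace ℝ (Fin nu))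
    (hNfeas : ∀ N : ℕ, N₁ ≤ N → DiscFeasible f e h (δ N) N (cN N) (dN N))
    (hNopt : ∀ N : ℕ, N₁ ≤ N → ∀ c d, DiscFeasible f e h (δ N) N c d →
      DiscCost Ecost F N (cN N) (dN N) ≤ DiscCost Ecost F N c d)
    -- the uniform accumulation point
    (xinf vinf : ℝ → EuclideanSpace ℝ (Fin nx)) (uinf : ℝ → EuclideanSpace ℝ (Fin nu))
    (hconvx : TendstoUniformlyOn (fun N => bpoly N (cN N)) xinf
      Filter.atTop (Set.Icc (0:ℝ) 1))
    (hconvx' : TendstoUniformlyOn (fun N => deriv (bpoly N (cN N))) vinf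
      Filter.atTop (Set.Icc (0:ℝ) 1))
    (hconvu : TendstoUniformlyOn (fun N => bpoly N (dN N)) uinf
      Filter.atTop (Set.Icc (0:ℝ) 1))
    (hxinfd : ∀ t ∈ Set.Icc (0:ℝ) 1, HasDerivWithinAt xinf (vinf t) (Set.Icc (0:ℝ) 1) t)
    (hvinf : ContinuousOn vinf (Set.Icc (0:ℝ) 1))
    (huinf : ContinuousOn uinf (Set.Icc (0:ℝ) 1)) :
    PFeasible f e h xinf vinf uinf ∧
      PCost Ecost F xinf uinf = PCost Ecost F xs us :=
  bernstein_discretization_consistency_general nx nu ne nh Ecost F f e h LE LF Lf Le Lh hE hF hf he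
    hh xs xs' us hfeas hopt CP δ hδ N₁ hBfeas cN dN hNfeas hNopt xinf vinf uinf hconvx hconvx'
    hconvu hxinfd hvinf huinf
end
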